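/- Let Λ be a ring and let (M, ε_M) be a differential Λ-module whose underlying module M admits a finite projective resolution 0 → P_l → ⋯ → P_1 → P_0 → M → 0 together with Λ-linear maps ε_i : P_i → P_i lifting ε_M such that each square anticommutes appropriately (ε_{i-1} ∂_i = −∂_i ε_i for i ≥ 1 and ε_M ∂_0 = ∂_0 ε_0) and ε_i² = 0. Then the module 𝑝M = P_l ⊕ ⋯ ⊕ P_0 with differential given by ε_i on the diagonal and ∂_i on the subdiagonal satisfies ε_{𝑝M}² = 0, and the map f : 𝑝M → M, (p_l, …, p_0) ↦ ∂_0(p_0), is a quasi-isomorphism of differential modules. -/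

import Mathlib

/-!
The total differential squares to zero because `ε_i² = 0`, `ε d = -d ε` and `d d = 0`, the last
by exactness. Both halves of the quasi-isomorphism come from solving
`ε_i z_i + d_i z_{i+1} = c_i` degree by degree for a cycle `c` of `𝑝M`, starting from a `z_0`
whose defect `c_0 - ε_0 z_0` lies in `ker π = im d_0`: the next defect is then killed by `d_i`,
so by exactness it is again a boundary, which supplies `z_{i+2}`. Since the resolution is bounded,
the solution is an element of the direct sum. Taking `c = 0` and `z_0` a preimage of a cycle of
`M` gives surjectivity on homology; taking `c` a cycle mapping to a boundary `ε_M (π z_0)` shows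
that `c` is a boundary.
-/

open DirectSum

namespace DirectSum

variable {R ι : Type*} [Semiring R] [DecidableEq ι] {M : ι → Type*} [∀ i, AddCommMonoid (M i)]
  [∀ i, Module R (M i)]

theorem component_lof_of_ne {i j : ι} (h : j ≠ i) (b : M j) :
    component R ι M i (lof R ι M j b) = 0 := by
  rw [component.of, dif_neg h]

theorem exists_forall_component_eq (s : Finset ι) (hs : ∀ i ∉ s, Subsingleton (M i))
    (z : ∀ i, M i) : ∃ x : ⨁ i, M i, ∀ i, component R ι M i x = z i := by
  refine ⟨DFinsupp.mk s fun i => z i, fun i => ?_⟩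
  by_cases hi : i ∈ s
  · exact dif_pos hi
  · exact (hs i hi).elim _ _

end DirectSum

section Resolution

variable {Λ : Type*} [Ring Λ] {P : ℕ → Type*} [∀ i, AddCommGroup (P i)] [∀ i, Module Λ (P i)]
  (e : ∀ i, P i →ₗ[Λ] P i) (d : ∀ i, P (i + 1) →ₗ[Λ] P i)

def resolutionDifferential : (⨁ i, P i) →ₗ[Λ] ⨁ i, P i :=
  toModule Λ ℕ (⨁ i, P i) fun i =>
    Nat.casesOn (motive := fun i => P i →ₗ[Λ] ⨁ i, P i) i (lof Λ ℕ P 0 ∘ₗ e 0)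
      fun j => lof Λ ℕ P (j + 1) ∘ₗ e (j + 1) + lof Λ ℕ P j ∘ₗ d j

theorem component_resolutionDifferential (i : ℕ) (x : ⨁ i, P i) :
    component Λ ℕ P i (resolutionDifferential e d x) =
      e i (component Λ ℕ P i x) + d i (component Λ ℕ P (i + 1) x) := by
  suffices component Λ ℕ P i ∘ₗ resolutionDifferential e d =
      e i ∘ₗ component Λ ℕ P i + d i ∘ₗ component Λ ℕ P (i + 1) from
    LinearMap.congr_fun this x
  refine linearMap_ext Λ fun j => LinearMap.ext fun p => ?_
  simp only [LinearMap.comp_apply, LinearMap.add_apply, resolutionDifferential, toModule_lof]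
  rcases j with _ | k
  · rcases eq_or_ne i 0 with rfl | hi
    · simp [component_lof_of_ne]
    · simp [component_lof_of_ne, hi.symm]
  · rcases eq_or_ne i (k + 1) with rfl | hi
    · simp [component_lof_of_ne]
    rcases eq_or_ne i k with rfl | hi'
    · simp [component_lof_of_ne]
    · simp [component_lof_of_ne, hi.symm, hi'.symm]

variable {e d}

theorem resolutionDifferential_comp_self (he2 : ∀ i, e i ∘ₗ e i = 0)
    (hanti : ∀ i, e i ∘ₗ d i = -(d i ∘ₗ e (i + 1))) (hdd : ∀ i, d i ∘ₗ d (i + 1) = 0) :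
    resolutionDifferential e d ∘ₗ resolutionDifferential e d = 0 := by
  refine LinearMap.ext fun x => ext_component Λ fun i => ?_
  have hee := LinearMap.congr_fun (he2 i) (component Λ ℕ P i x)
  have hed := LinearMap.congr_fun (hanti i) (component Λ ℕ P (i + 1) x)
  have hdd' := LinearMap.congr_fun (hdd i) (component Λ ℕ P (i + 2) x)
  simp only [LinearMap.comp_apply, LinearMap.neg_apply, LinearMap.zero_apply] at hee hed hdd'
  simp only [LinearMap.comp_apply, LinearMap.zero_apply, component_resolutionDifferential,
    map_add, map_zero, hee, hed, hdd']
  abel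

theorem exists_lift_of_exact (he2 : ∀ i, e i ∘ₗ e i = 0)
    (hanti : ∀ i, e i ∘ₗ d i = -(d i ∘ₗ e (i + 1)))
    (hex : ∀ i, LinearMap.ker (d i) = LinearMap.range (d (i + 1)))
    {c : ∀ i, P i} (hc : ∀ i, e i (c i) + d i (c (i + 1)) = 0)
    {i : ℕ} {q : P i} (hq : c i - e i q ∈ LinearMap.range (d i)) :
    ∃ r : P (i + 1), d i r = c i - e i q ∧
      c (i + 1) - e (i + 1) r ∈ LinearMap.range (d (i + 1)) := by
  obtain ⟨r, hr⟩ := hq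
  refine ⟨r, hr, ?_⟩
  have hed := LinearMap.congr_fun (hanti i) r
  have hee := LinearMap.congr_fun (he2 i) q
  simp only [LinearMap.comp_apply, LinearMap.zero_apply] at hee
  simp only [LinearMap.comp_apply, LinearMap.neg_apply, hr, map_sub, hee, sub_zero] at hed
  rw [← hex, LinearMap.mem_ker, map_sub, eq_neg_of_add_eq_zero_right (hc i),
    neg_eq_iff_eq_neg.mpr hed, sub_self]

theorem exists_seq_of_exact (he2 : ∀ i, e i ∘ₗ e i = 0)
    (hanti : ∀ i, e i ∘ₗ d i = -(d i ∘ₗ e (i + 1)))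
    (hex : ∀ i, LinearMap.ker (d i) = LinearMap.range (d (i + 1)))
    {c : ∀ i, P i} (hc : ∀ i, e i (c i) + d i (c (i + 1)) = 0)
    {z₀ : P 0} (h₀ : c 0 - e 0 z₀ ∈ LinearMap.range (d 0)) :
    ∃ z : ∀ i, P i, z 0 = z₀ ∧ ∀ i, e i (z i) + d i (z (i + 1)) = c i := by
  choose lift hlift hlift_mem using fun i (q : P i) (hq : c i - e i q ∈ LinearMap.range (d i)) =>
    exists_lift_of_exact he2 hanti hex hc hq
  let z : ∀ i, {q : P i // c i - e i q ∈ LinearMap.range (d i)} := fun i =>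
    Nat.rec ⟨z₀, h₀⟩ (fun i q => ⟨lift i q q.2, hlift_mem i q q.2⟩) i
  refine ⟨fun i => (z i).1, rfl, fun i => ?_⟩
  rw [show d i (z (i + 1)).1 = c i - e i (z i).1 from hlift i _ (z i).2, add_sub_cancel]

theorem exists_resolutionDifferential_eq {l : ℕ} (hbdd : ∀ i, l < i → Subsingleton (P i))
    (he2 : ∀ i, e i ∘ₗ e i = 0) (hanti : ∀ i, e i ∘ₗ d i = -(d i ∘ₗ e (i + 1)))
    (hex : ∀ i, LinearMap.ker (d i) = LinearMap.range (d (i + 1)))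
    {y : ⨁ i, P i} (hy : resolutionDifferential e d y = 0) {z₀ : P 0}
    (h₀ : component Λ ℕ P 0 y - e 0 z₀ ∈ LinearMap.range (d 0)) :
    ∃ w, component Λ ℕ P 0 w = z₀ ∧ resolutionDifferential e d w = y := by
  have hc (i : ℕ) : e i (component Λ ℕ P i y) + d i (component Λ ℕ P (i + 1) y) = 0 := by
    rw [← component_resolutionDifferential, hy, map_zero]
  obtain ⟨z, rfl, hz⟩ := exists_seq_of_exact he2 hanti hex hc h₀
  obtain ⟨w, hw⟩ := exists_forall_component_eq (R := Λ) (Finset.range (l + 1))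
    (fun i hi => hbdd i (by simpa using hi)) z
  refine ⟨w, hw 0, ext_component Λ fun i => ?_⟩
  rw [component_resolutionDifferential, hw, hw, hz]

end Resolution

theorem resolution_of_differential_module_is_quasi_iso
    (Λ : Type*) [Ring Λ] (l : ℕ)
    (M : Type*) [AddCommGroup M] [Module Λ M]
    (εM : M →ₗ[Λ] M)
    (P : ℕ → Type) [∀ i, AddCommGroup (P i)] [∀ i, Module Λ (P i)]
    (hbdd : ∀ i, l < i → Subsingleton (P i))
    (d : ∀ i : ℕ, P (i + 1) →ₗ[Λ] P i) (π : P 0 →ₗ[Λ] M)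
    -- the resolution is a complex and is exact
    (hπsurj : Function.Surjective π)
    (hex0 : LinearMap.ker π = LinearMap.range (d 0))
    (hex : ∀ i, LinearMap.ker (d i) = LinearMap.range (d (i + 1)))
    -- the lifts of ε_M and their (anti)commutation relations
    (e : ∀ i : ℕ, P i →ₗ[Λ] P i)
    (he2 : ∀ i, e i ∘ₗ e i = 0)
    (hanti : ∀ i, e i ∘ₗ d i = - (d i ∘ₗ e (i + 1)))
    (hcomm : εM ∘ₗ π = π ∘ₗ e 0)
    -- the differential on 𝑝M = ⊕ᵢ P_i : ε_i on the diagonal, d on the subdiagonal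
    (εp : (⨁ i, P i) →ₗ[Λ] ⨁ i, P i)
    (hεp : εp = DirectSum.toModule Λ ℕ (⨁ i, P i) (fun i =>
      match i with
      | 0 => (DirectSum.lof Λ ℕ P 0) ∘ₗ e 0
      | (j + 1) => (DirectSum.lof Λ ℕ P (j + 1)) ∘ₗ e (j + 1)
          + (DirectSum.lof Λ ℕ P j) ∘ₗ d j))
    -- the comparison map f(p_l, …, p_0) = π(p_0)
    (f : (⨁ i, P i) →ₗ[Λ] M)
    (hfdef : f = π ∘ₗ DirectSum.component Λ ℕ P 0) :
    -- εp is a differential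
    εp ∘ₗ εp = 0 ∧
    -- f is a morphism of differential modules
    f ∘ₗ εp = εM ∘ₗ f ∧
    -- f is a quasi-isomorphism: it induces an isomorphism ker/im → ker/im
    (∀ x ∈ LinearMap.ker εM, ∃ y ∈ LinearMap.ker εp,
      f y - x ∈ LinearMap.range εM) ∧
    (∀ y ∈ LinearMap.ker εp, f y ∈ LinearMap.range εM → y ∈ LinearMap.range εp) := by
  replace hεp : εp = resolutionDifferential e d := by
    subst hεp; congr 1; funext i; cases i <;> rfl
  subst hεp hfdef
  have hπd (p : P 1) : π (d 0 p) = 0 := 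
    LinearMap.congr_fun (LinearMap.range_le_ker_iff.mp hex0.ge) p
  have hπe (p : P 0) : π (e 0 p) = εM (π p) := (LinearMap.congr_fun hcomm p).symm
  refine ⟨resolutionDifferential_comp_self he2 hanti
    fun i => LinearMap.range_le_ker_iff.mp (hex i).ge, ?_, ?_, ?_⟩
  · refine LinearMap.ext fun x => ?_
    simp [component_resolutionDifferential, hπd, hπe]
  · rintro x hx
    obtain ⟨p, rfl⟩ := hπsurj x
    have h₀ : component Λ ℕ P 0 0 - e 0 p ∈ LinearMap.range (d 0) := by
      rw [← hex0, LinearMap.mem_ker, map_zero, zero_sub, map_neg, hπe, LinearMap.mem_ker.mp hx,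
        neg_zero]
    obtain ⟨w, hw₀, hw⟩ := exists_resolutionDifferential_eq hbdd he2 hanti hex (map_zero _) h₀
    exact ⟨w, hw, by simp [hw₀]⟩
  · rintro y hy ⟨m, hm⟩
    obtain ⟨q, rfl⟩ := hπsurj m
    have h₀ : component Λ ℕ P 0 y - e 0 q ∈ LinearMap.range (d 0) := by
      rw [← hex0, LinearMap.mem_ker, map_sub, hπe, hm, LinearMap.comp_apply, sub_self]
    obtain ⟨w, -, hw⟩ := exists_resolutionDifferential_eq hbdd he2 hanti hex hy h₀
    exact ⟨w, hw⟩
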